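/- arXiv:2512.15237 — 7 statements merged into one kernel-verified Lean document; each statement's English description precedes it below -/
import Mathlib

section
/- Let N > 1/4 be real. Then the quartic polynomial u⁴ + 8N(1 − 6N + 8N²)u² − 32(1 − 4N)²N²u + 64(1 − 4N)²N³ has no real roots. -/
/-!
Multiplied by `4N`, the quartic is the sum of two squares
`(4N(4N - 1)(4N - u) - u²)² + (4N - 1)(u(4N - u))²`, the second weighted by `4N - 1 > 0`.
The second square vanishes only at `u = 0` and `u = 4N`, where the first does not.
-/

lemma sq_add_mul_sq_pos {a c : ℝ} (ha : 0 < a) (hc : c ≠ 0) (u : ℝ) :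
    0 < (a * c * (c - u) - u ^ 2) ^ 2 + a * (u * (c - u)) ^ 2 := by
  refine lt_of_le_of_ne (by positivity) fun h => ?_
  obtain ⟨hfirst, hsecond⟩ :=
    (add_eq_zero_iff_of_nonneg (sq_nonneg _) (by positivity)).1 h.symm
  rcases mul_eq_zero.1 (pow_eq_zero_iff two_ne_zero |>.1 (mul_eq_zero.1 hsecond |>.resolve_left
    ha.ne')) with rfl | hcu
  · simp [ha.ne', hc] at hfirst
  · obtain rfl : u = c := (sub_eq_zero.1 hcu).symm
    simp [hc] at hfirst

theorem stmt_7 (N : ℝ) (hN : N > 1 / 4) :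
    ∀ u : ℝ, u ^ 4 + 8 * N * (1 - 6 * N + 8 * N ^ 2) * u ^ 2
      - 32 * (1 - 4 * N) ^ 2 * N ^ 2 * u + 64 * (1 - 4 * N) ^ 2 * N ^ 3 ≠ 0 := by
  intro u h
  have hpos := sq_add_mul_sq_pos (a := 4 * N - 1) (c := 4 * N) (by linarith) (by positivity) u
  have hsum : 4 * N * (u ^ 4 + 8 * N * (1 - 6 * N + 8 * N ^ 2) * u ^ 2
      - 32 * (1 - 4 * N) ^ 2 * N ^ 2 * u + 64 * (1 - 4 * N) ^ 2 * N ^ 3)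
      = ((4 * N - 1) * (4 * N) * (4 * N - u) - u ^ 2) ^ 2
        + (4 * N - 1) * (u * (4 * N - u)) ^ 2 := by ring
  rw [h, mul_zero] at hsum
  exact hpos.ne hsum
end

section
/- Let N be rational with N > 1/4 and let m be rational with m > 1 and N = m² + 1. Then the point P = (1/m², (3m² + 1)/m³) lies on the curve v² = u³ + 2(2N² + 2N − 1)u² − (4N − 1)u. -/
theorem on_curve_sq_add_one {K : Type*} [Field K] {m : K} (hm : m ≠ 0) :
    ((3 * m ^ 2 + 1) / m ^ 3) ^ 2 =
      (1 / m ^ 2) ^ 3 + 2 * (2 * (m ^ 2 + 1) ^ 2 + 2 * (m ^ 2 + 1) - 1) * (1 / m ^ 2) ^ 2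
        - (4 * (m ^ 2 + 1) - 1) * (1 / m ^ 2) := by
  field_simp
  ring

theorem stmt_8_general (N m : ℚ) (hm : m > 1) (hNm : N = m ^ 2 + 1) :
    ((3 * m ^ 2 + 1) / m ^ 3) ^ 2 =
      (1 / m ^ 2) ^ 3 + 2 * (2 * N ^ 2 + 2 * N - 1) * (1 / m ^ 2) ^ 2
        - (4 * N - 1) * (1 / m ^ 2) := by
  subst hNm
  exact on_curve_sq_add_one (by positivity)

theorem stmt_8 (N m : ℚ) (hN : N > 1 / 4) (hm : m > 1) (hNm : N = m ^ 2 + 1) :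
    ((3 * m ^ 2 + 1) / m ^ 3) ^ 2 =
      (1 / m ^ 2) ^ 3 + 2 * (2 * N ^ 2 + 2 * N - 1) * (1 / m ^ 2) ^ 2
        - (4 * N - 1) * (1 / m ^ 2) :=
  stmt_8_general N m hm hNm
end

section
/- Let m be rational with m > 1 and N = m² − 1. Then the point P = (1/m², (m² − 1)/m³) lies on the curve v² = u³ + 2(2N² + 2N − 1)u² − (4N − 1)u. -/
theorem stmt_9 (N m : ℚ) (hm : m > 1) (hNm : N = m ^ 2 - 1) :
    ((m ^ 2 - 1) / m ^ 3) ^ 2 =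
      (1 / m ^ 2) ^ 3 + 2 * (2 * N ^ 2 + 2 * N - 1) * (1 / m ^ 2) ^ 2
        - (4 * N - 1) * (1 / m ^ 2) := by
  have hm₀ : m ≠ 0 := by positivity
  subst hNm
  field_simp
  ring
end

section
/- Let m be a rational with m > 1, and set f = (m−1)(2m² + m + 1)², g = (m+1)(2m² − m + 1)², h = 4m(m² + 1). Then f, g, h are positive, satisfy the strict triangle inequalities, and 2fgh / ((f+g+h)(f−g−h)(g−h−f)) = m² + 1. -/
/-!
The perimeter f + g + h = 2m(2m² + m + 1)(2m² − m + 1) and the excesses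
g + h − f = 2(m + 1)(2m² + m + 1), h + f − g = 2(m − 1)(2m² − m + 1) multiply to 8m·fg,
so the ratio is 2fgh / (8m·fg) = h / 4m = m² + 1.
-/

namespace ExcircleTriangle

variable {R : Type*} {m f g h : R}

section Identities

variable [CommRing R]
  (hf : f = (m - 1) * (2 * m ^ 2 + m + 1) ^ 2)
  (hg : g = (m + 1) * (2 * m ^ 2 - m + 1) ^ 2)
  (hh : h = 4 * m * (m ^ 2 + 1))
include hf hg hh

theorem f_add_g_add_h : f + g + h = 2 * m * (2 * m ^ 2 + m + 1) * (2 * m ^ 2 - m + 1) := by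
  subst hf hg hh; ring

theorem f_add_g_sub_h : f + g - h = 2 * m * (m - 1) * (m + 1) * (4 * m ^ 2 + 3) := by
  subst hf hg hh; ring

theorem g_add_h_sub_f : g + h - f = 2 * (m + 1) * (2 * m ^ 2 + m + 1) := by
  subst hf hg hh; ring

theorem h_add_f_sub_g : h + f - g = 2 * (m - 1) * (2 * m ^ 2 - m + 1) := by
  subst hf hg hh; ring

theorem perimeter_mul_excesses : (f + g + h) * (f - g - h) * (g - h - f) = 8 * m * f * g := by
  calc (f + g + h) * (f - g - h) * (g - h - f) = (f + g + h) * (g + h - f) * (h + f - g) := by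
        ring
    _ = 8 * m * f * g := by
        rw [f_add_g_add_h hf hg hh, g_add_h_sub_f hf hg hh, h_add_f_sub_g hf hg hh, hf, hg]
        ring

end Identities

section Positivity

variable [CommRing R] [LinearOrder R] [IsStrictOrderedRing R]

theorem two_mul_sq_sub_add_one_pos (m : R) : 0 < 2 * m ^ 2 - m + 1 := by
  nlinarith [sq_nonneg (4 * m - 1)]

theorem f_pos (hm : 1 < m) (hf : f = (m - 1) * (2 * m ^ 2 + m + 1) ^ 2) : 0 < f := by
  have hm0 : 0 < m := by linarith
  rw [hf]
  exact mul_pos (sub_pos.2 hm) (by positivity)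

theorem g_pos (hm : 0 < m) (hg : g = (m + 1) * (2 * m ^ 2 - m + 1) ^ 2) : 0 < g := by
  rw [hg]
  exact mul_pos (by positivity) (pow_pos (two_mul_sq_sub_add_one_pos m) 2)

theorem h_pos (hm : 0 < m) (hh : h = 4 * m * (m ^ 2 + 1)) : 0 < h :=
  hh ▸ by positivity

variable (hf : f = (m - 1) * (2 * m ^ 2 + m + 1) ^ 2)
  (hg : g = (m + 1) * (2 * m ^ 2 - m + 1) ^ 2)
  (hh : h = 4 * m * (m ^ 2 + 1))
include hf hg hh

theorem h_lt_f_add_g (hm : 1 < m) : h < f + g := by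
  have hm0 : 0 < m := by linarith
  have hexcess : 0 < 2 * m * (m - 1) * (m + 1) * (4 * m ^ 2 + 3) :=
    mul_pos (mul_pos (mul_pos (by positivity) (sub_pos.2 hm)) (by positivity)) (by positivity)
  linarith [f_add_g_sub_h hf hg hh]

theorem f_lt_g_add_h (hm : 0 < m) : f < g + h := by
  have hexcess : 0 < 2 * (m + 1) * (2 * m ^ 2 + m + 1) := by positivity
  linarith [g_add_h_sub_f hf hg hh]

theorem g_lt_h_add_f (hm : 1 < m) : g < h + f := by
  have hexcess : 0 < 2 * (m - 1) * (2 * m ^ 2 - m + 1) :=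
    mul_pos (mul_pos two_pos (sub_pos.2 hm)) (two_mul_sq_sub_add_one_pos m)
  linarith [h_add_f_sub_g hf hg hh]

end Positivity

end ExcircleTriangle

open ExcircleTriangle

theorem stmt_10 (m : ℚ) (hm : m > 1)
    (f g h : ℚ)
    (hf : f = (m - 1) * (2 * m ^ 2 + m + 1) ^ 2)
    (hg : g = (m + 1) * (2 * m ^ 2 - m + 1) ^ 2)
    (hh : h = 4 * m * (m ^ 2 + 1)) :
    0 < f ∧ 0 < g ∧ 0 < h ∧
    f + g > h ∧ g + h > f ∧ h + f > g ∧
    2 * f * g * h / ((f + g + h) * (f - g - h) * (g - h - f)) = m ^ 2 + 1 := by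
  have hm0 : 0 < m := by linarith
  have hf0 := f_pos hm hf
  have hg0 := g_pos hm0 hg
  refine ⟨hf0, hg0, h_pos hm0 hh, h_lt_f_add_g hf hg hh hm, f_lt_g_add_h hf hg hh hm0,
    g_lt_h_add_f hf hg hh hm, ?_⟩
  rw [perimeter_mul_excesses hf hg hh, hh]
  field_simp
  norm_num
end

section
/- Let N be rational and (u, v) a point with v² = u³ + 2(2N² + 2N − 1)u² − (4N − 1)u, u ≠ 1, and u ≠ 1 − 4N. Define x = −4N(2Nu + v)/((u−1)(4N + u − 1)) and y = −4N(4N + u² − 1)(8N²u + 4Nu + 4Nv − 4N + u² − 2u + 1)/((u−1)²(4N + u − 1)²). Then y² = x⁴ + 4(2N−1)x³ + 4(4N²−2N+1)x² − 32N²x + 16N². -/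
/-!
The quartic is `Q(x)² - 16N(4N-1)x` with `Q(x) = x² + 2(2N-1)x + 4N`, so it suffices to show
`(y - Q(x))(y + Q(x)) = -16N(4N-1)x`. On `E_N` both factors simplify: `y - Q(x)` loses the factor
`(4N+u-1)²` of its denominator and `y + Q(x)` the factor `(u-1)²`, leaving numerators linear in `v`
whose product is `(2Nu+v)(u-1)(4N+u-1)` modulo the curve equation.
-/

section

variable {R K : Type*} [CommRing R] [Field K]

def quarticQ (N x : R) : R := x ^ 2 + 2 * (2 * N - 1) * x + 4 * N

theorem quartic_eq_quarticQ_sq_sub (N x : R) :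
    x ^ 4 + 4 * (2 * N - 1) * x ^ 3 + 4 * (4 * N ^ 2 - 2 * N + 1) * x ^ 2 - 32 * N ^ 2 * x
      + 16 * N ^ 2 = quarticQ N x ^ 2 - 16 * N * (4 * N - 1) * x := by
  unfold quarticQ
  ring

def ellipticToQuarticX (N u v : K) : K :=
  -(4 * N * (2 * N * u + v)) / ((u - 1) * (4 * N + u - 1))

def ellipticToQuarticY (N u v : K) : K :=
  -(4 * N * (4 * N + u ^ 2 - 1) *
    (8 * N ^ 2 * u + 4 * N * u + 4 * N * v - 4 * N + u ^ 2 - 2 * u + 1)) /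
    ((u - 1) ^ 2 * (4 * N + u - 1) ^ 2)

variable {N u v : K}

theorem ellipticToQuarticY_sub_quarticQ
    (hE : v ^ 2 = u ^ 3 + 2 * (2 * N ^ 2 + 2 * N - 1) * u ^ 2 - (4 * N - 1) * u)
    (hu1 : u - 1 ≠ 0) (hu2 : 4 * N + u - 1 ≠ 0) :
    ellipticToQuarticY N u v - quarticQ N (ellipticToQuarticX N u v) =
      -(8 * N * (v + u * (u + 2 * N - 1))) / (u - 1) ^ 2 := by
  unfold ellipticToQuarticY quarticQ ellipticToQuarticX
  field_simp
  linear_combination (-16 * N ^ 2) * hE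

theorem ellipticToQuarticY_add_quarticQ
    (hE : v ^ 2 = u ^ 3 + 2 * (2 * N ^ 2 + 2 * N - 1) * u ^ 2 - (4 * N - 1) * u)
    (hu1 : u - 1 ≠ 0) (hu2 : 4 * N + u - 1 ≠ 0) :
    ellipticToQuarticY N u v + quarticQ N (ellipticToQuarticX N u v) =
      8 * N * (1 - 4 * N) * (v + (2 * N - 1) * u + 1 - 4 * N) / (4 * N + u - 1) ^ 2 := by
  unfold ellipticToQuarticY quarticQ ellipticToQuarticX
  field_simp
  linear_combination (16 * N ^ 2) * hE

theorem ellipticToQuarticY_sq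
    (hE : v ^ 2 = u ^ 3 + 2 * (2 * N ^ 2 + 2 * N - 1) * u ^ 2 - (4 * N - 1) * u)
    (hu1 : u - 1 ≠ 0) (hu2 : 4 * N + u - 1 ≠ 0) :
    ellipticToQuarticY N u v ^ 2 = quarticQ N (ellipticToQuarticX N u v) ^ 2
      - 16 * N * (4 * N - 1) * ellipticToQuarticX N u v := by
  have hfactor : (v + u * (u + 2 * N - 1)) * (v + (2 * N - 1) * u + 1 - 4 * N) =
      (2 * N * u + v) * (u - 1) * (4 * N + u - 1) := by
    linear_combination hE
  have hprod : -(8 * N * (v + u * (u + 2 * N - 1))) / (u - 1) ^ 2 *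
      (8 * N * (1 - 4 * N) * (v + (2 * N - 1) * u + 1 - 4 * N) / (4 * N + u - 1) ^ 2) =
      -16 * N * (4 * N - 1) * ellipticToQuarticX N u v := by
    rw [ellipticToQuarticX, div_mul_div_comm, mul_div_assoc',
      div_eq_div_iff (mul_ne_zero (pow_ne_zero 2 hu1) (pow_ne_zero 2 hu2))
        (mul_ne_zero hu1 hu2)]
    linear_combination (-64 * N ^ 2 * (1 - 4 * N) * (u - 1) * (4 * N + u - 1)) * hfactor
  rw [← ellipticToQuarticY_sub_quarticQ hE hu1 hu2,
    ← ellipticToQuarticY_add_quarticQ hE hu1 hu2] at hprod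
  linear_combination hprod

end

theorem stmt_16 (N u v : ℚ)
    (hE : v ^ 2 = u ^ 3 + 2 * (2 * N ^ 2 + 2 * N - 1) * u ^ 2 - (4 * N - 1) * u)
    (hu1 : u ≠ 1) (hu2 : u ≠ 1 - 4 * N)
    (x y : ℚ)
    (hx : x = -(4 * N * (2 * N * u + v)) / ((u - 1) * (4 * N + u - 1)))
    (hy : y = -(4 * N * (4 * N + u ^ 2 - 1) *
        (8 * N ^ 2 * u + 4 * N * u + 4 * N * v - 4 * N + u ^ 2 - 2 * u + 1)) /
        ((u - 1) ^ 2 * (4 * N + u - 1) ^ 2)) :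
    y ^ 2 = x ^ 4 + 4 * (2 * N - 1) * x ^ 3 + 4 * (4 * N ^ 2 - 2 * N + 1) * x ^ 2
      - 32 * N ^ 2 * x + 16 * N ^ 2 := by
  have hu1' : u - 1 ≠ 0 := sub_ne_zero.mpr hu1
  have hu2' : 4 * N + u - 1 ≠ 0 := fun h ↦ hu2 (by linear_combination h)
  rw [quartic_eq_quarticQ_sq_sub]
  subst hx hy
  exact ellipticToQuarticY_sq hE hu1' hu2'
end

section
/- Let N > 1/4 and 0 < x < 1 be reals, and suppose B := x⁴ + 4(2N−1)x³ + 4(4N²−2N+1)x² − 32N²x + 16N² is nonnegative. Set A₁ = −x² − 2(2N−1)x + 4N and A₂ = −x² + 2(2N+1)x − 4N. Then A₁ − √B > 0 and A₂ + √B > 0. -/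
/-! Both inequalities come from comparing `B` with a square: `A₁² - B = 16 N x (1 - x)` and
`B - A₂² = 16 N x (1 - x)²` are positive for `N > 0` and `0 < x < 1`, while `A₁ > 0`. -/

lemma sq_sub_quartic_eq (N x : ℝ) :
    (-x ^ 2 - 2 * (2 * N - 1) * x + 4 * N) ^ 2 -
      (x ^ 4 + 4 * (2 * N - 1) * x ^ 3 + 4 * (4 * N ^ 2 - 2 * N + 1) * x ^ 2
        - 32 * N ^ 2 * x + 16 * N ^ 2) = 16 * N * x * (1 - x) := by
  ring

lemma quartic_sub_sq_eq (N x : ℝ) :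
    (x ^ 4 + 4 * (2 * N - 1) * x ^ 3 + 4 * (4 * N ^ 2 - 2 * N + 1) * x ^ 2
        - 32 * N ^ 2 * x + 16 * N ^ 2) -
      (-x ^ 2 + 2 * (2 * N + 1) * x - 4 * N) ^ 2 = 16 * N * x * (1 - x) ^ 2 := by
  ring

lemma sub_sqrt_pos_of_sq_gt {a b : ℝ} (ha : 0 < a) (h : b < a ^ 2) : 0 < a - √b :=
  sub_pos.2 ((Real.sqrt_lt' ha).2 h)

lemma add_sqrt_pos_of_sq_lt {a b : ℝ} (h : a ^ 2 < b) : 0 < a + √b :=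
  neg_lt_iff_pos_add.1 (Real.neg_sqrt_lt_of_sq_lt h)

theorem stmt_17_general (N x : ℝ) (hN : N > 1 / 4) (hx0 : 0 < x) (hx1 : x < 1)
    (B : ℝ)
    (hB : B = x ^ 4 + 4 * (2 * N - 1) * x ^ 3 + 4 * (4 * N ^ 2 - 2 * N + 1) * x ^ 2
      - 32 * N ^ 2 * x + 16 * N ^ 2) :
    (-x ^ 2 - 2 * (2 * N - 1) * x + 4 * N) - Real.sqrt B > 0 ∧
    (-x ^ 2 + 2 * (2 * N + 1) * x - 4 * N) + Real.sqrt B > 0 := by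
  have hNx : 0 < 16 * N * x := by positivity
  have h1x : 0 < 1 - x := sub_pos.2 hx1
  have hA₁ : 0 < -x ^ 2 - 2 * (2 * N - 1) * x + 4 * N := by nlinarith
  subst hB
  constructor
  · refine sub_sqrt_pos_of_sq_gt hA₁ (sub_pos.1 ?_)
    rw [sq_sub_quartic_eq]
    positivity
  · refine add_sqrt_pos_of_sq_lt (sub_pos.1 ?_)
    rw [quartic_sub_sq_eq]
    positivity

theorem stmt_17 (N x : ℝ) (hN : N > 1 / 4) (hx0 : 0 < x) (hx1 : x < 1)
    (B : ℝ)
    (hB : B = x ^ 4 + 4 * (2 * N - 1) * x ^ 3 + 4 * (4 * N ^ 2 - 2 * N + 1) * x ^ 2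
      - 32 * N ^ 2 * x + 16 * N ^ 2)
    (hBnn : 0 ≤ B) :
    (-x ^ 2 - 2 * (2 * N - 1) * x + 4 * N) - Real.sqrt B > 0 ∧
    (-x ^ 2 + 2 * (2 * N + 1) * x - 4 * N) + Real.sqrt B > 0 :=
  stmt_17_general N x hN hx0 hx1 B hB
end

section
/- Let N > 1/4 and 0 < x < 1 be reals with B := x⁴ + 4(2N−1)x³ + 4(4N²−2N+1)x² − 32N²x + 16N² ≥ 0. Set A₃ = x² − 4Nx + 4N and A₄ = x² + 4Nx − 4N. Then A₃ − √B > 0 and A₄ + √B > 0. -/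
/-! Both inequalities come from the identities `A₃² - B = 4x²(1 - x)(4N - 1)` and
`B - A₄² = 4x²(1 - x)`: for `N > 1/4` and `0 < x < 1` they are positive, so `√B` lies strictly
between `|A₄|` and `A₃`, the latter being positive as `A₃ = x² + 4N(1 - x)`. -/

namespace QuarticCurve

def A₃ (N x : ℝ) : ℝ := x ^ 2 - 4 * N * x + 4 * N

def A₄ (N x : ℝ) : ℝ := x ^ 2 + 4 * N * x - 4 * N

def B (N x : ℝ) : ℝ :=
  x ^ 4 + 4 * (2 * N - 1) * x ^ 3 + 4 * (4 * N ^ 2 - 2 * N + 1) * x ^ 2 - 32 * N ^ 2 * x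
    + 16 * N ^ 2

theorem A₃_sq_sub_B (N x : ℝ) : A₃ N x ^ 2 - B N x = 4 * x ^ 2 * (1 - x) * (4 * N - 1) := by
  unfold A₃ B; ring

theorem B_sub_A₄_sq (N x : ℝ) : B N x - A₄ N x ^ 2 = 4 * x ^ 2 * (1 - x) := by
  unfold A₄ B; ring

theorem A₃_pos {N x : ℝ} (hN : 0 < N) (hx1 : x < 1) : 0 < A₃ N x := by
  have : A₃ N x = x ^ 2 + 4 * N * (1 - x) := by unfold A₃; ring
  rw [this]
  have : 0 < 4 * N * (1 - x) := by have := sub_pos.2 hx1; positivity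
  positivity

theorem sqrt_B_lt_A₃ {N x : ℝ} (hN : 1 / 4 < N) (hx0 : x ≠ 0) (hx1 : x < 1) :
    √(B N x) < A₃ N x := by
  rw [Real.sqrt_lt' (A₃_pos (by linarith) hx1), ← sub_pos, A₃_sq_sub_B]
  have := sub_pos.2 hx1
  have : 0 < 4 * N - 1 := by linarith
  positivity

theorem neg_sqrt_B_lt_A₄ {N x : ℝ} (hx0 : x ≠ 0) (hx1 : x < 1) : -√(B N x) < A₄ N x := by
  refine Real.neg_sqrt_lt_of_sq_lt (sub_pos.1 ?_)
  rw [B_sub_A₄_sq]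
  have := sub_pos.2 hx1
  positivity

end QuarticCurve

open QuarticCurve in
theorem stmt_18_general (N x : ℝ) (hN : N > 1 / 4) (hx0 : 0 < x) (hx1 : x < 1)
    (B : ℝ)
    (hB : B = x ^ 4 + 4 * (2 * N - 1) * x ^ 3 + 4 * (4 * N ^ 2 - 2 * N + 1) * x ^ 2
      - 32 * N ^ 2 * x + 16 * N ^ 2) :
    (x ^ 2 - 4 * N * x + 4 * N) - Real.sqrt B > 0 ∧
    (x ^ 2 + 4 * N * x - 4 * N) + Real.sqrt B > 0 := by
  subst hB
  exact ⟨sub_pos.2 (sqrt_B_lt_A₃ hN hx0.ne' hx1),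
    neg_lt_iff_pos_add.1 (neg_sqrt_B_lt_A₄ hx0.ne' hx1)⟩

theorem stmt_18 (N x : ℝ) (hN : N > 1 / 4) (hx0 : 0 < x) (hx1 : x < 1)
    (B : ℝ)
    (hB : B = x ^ 4 + 4 * (2 * N - 1) * x ^ 3 + 4 * (4 * N ^ 2 - 2 * N + 1) * x ^ 2
      - 32 * N ^ 2 * x + 16 * N ^ 2)
    (hBnn : 0 ≤ B) :
    (x ^ 2 - 4 * N * x + 4 * N) - Real.sqrt B > 0 ∧
    (x ^ 2 + 4 * N * x - 4 * N) + Real.sqrt B > 0 :=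
  stmt_18_general N x hN hx0 hx1 B hB
end
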